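/- There exist constants c_1, c_2 > 0, independent of τ (equivalently of δ = τ^{-1}), of J_1, J_2, of a, and of ℓ, such that the following holds: for every a ∈ ℐ and ℓ ∈ ℕ_0^* with μ = a + ℓ ∈ 𝒩 and ν = a − ℓ ∈ 𝒩, and for every η' ∈ J̃_1 and η'' ∈ J̃_2 with η = η' + η'', the rotated slice-sum satisfies ℛ_{−a δ^{1/2}}(u_{μ,J_1}^{η'} + u_{ν,J_2}^{η''}) ⊆ R(p_{ℓ,δ}(η',η''); c_1 ℓ_* δ, c_2 δ^{1/2}). -/

import Mathlib

/-!
A point of the slice `u_{μ,J}^η` has modulus within `δ` of `η` and argument within `√δ` of `μ√δ`,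
so after the rotation by `-a√δ` it is close to `η e^{±iℓ√δ}`. The imaginary parts differ by
`O(√δ)`. For the real parts the slope of `cos` between the two angles is at most `(ℓ + 1)√δ`,
which gives the finer bound `O((ℓ + 1)δ)`. The centres of the two slices add up to
`p_{ℓ,δ}(η', η'')`.
-/

open Set Pointwise

noncomputable def GammaD (δ μ : ℝ) : Set ℂ :=
  {ξ : ℂ | ξ ≠ 0 ∧ μ * Real.sqrt δ ≤ ξ.arg ∧ ξ.arg < (μ + 1) * Real.sqrt δ}

def calND (δ : ℝ) : Set ℤ :=
  {μ : ℤ | |(μ : ℝ)| ≤ Real.pi / 8 * (Real.sqrt δ)⁻¹ - 1}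

noncomputable def uSetD (δ μ : ℝ) (J : Set ℝ) : Set (ℂ × ℝ) :=
  {p : ℂ × ℝ | |p.2 - ‖p.1‖| ≤ δ ∧ p.1 ∈ GammaD δ μ ∧ ‖p.1‖ ∈ J}

noncomputable def uSliceD (δ μ : ℝ) (J : Set ℝ) (η : ℝ) : Set ℂ :=
  {ξ : ℂ | (ξ, η) ∈ uSetD δ μ J}

noncomputable def calID (δ : ℝ) : Set ℝ :=
  {a : ℝ | ∃ μ ∈ calND δ, ∃ ν ∈ calND δ, a = ((μ : ℝ) + (ν : ℝ)) / 2}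

noncomputable def rot (σ : ℝ) : ℂ → ℂ := fun z => Complex.exp (σ * Complex.I) * z

noncomputable def pPt (δ ℓ η' η'' : ℝ) : ℂ :=
  ⟨(η' + η'') * Real.cos (ℓ * Real.sqrt δ), (η' - η'') * Real.sin (ℓ * Real.sqrt δ)⟩

def rect (p : ℂ) (a b : ℝ) : Set ℂ :=
  {z : ℂ | |z.re - p.re| ≤ a ∧ |z.im - p.im| ≤ b}

open Complex

theorem Real.abs_cos_sub_cos_le_mul (x y : ℝ) :
    |Real.cos x - Real.cos y| ≤ (|y| + |x - y|) * |x - y| := by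
  have hsum : |Real.sin ((x + y) / 2)| ≤ |y| + |x - y| :=
    calc |Real.sin ((x + y) / 2)| ≤ |(x + y) / 2| := Real.abs_sin_le_abs
      _ = |(x - y) + 2 * y| / 2 := by rw [abs_div, abs_two]; ring_nf
      _ ≤ (|x - y| + 2 * |y|) / 2 := by
          gcongr; exact (abs_add_le _ _).trans_eq (by rw [abs_mul, abs_two])
      _ ≤ |y| + |x - y| := by linarith [abs_nonneg (x - y)]
  have hdiff : |Real.sin ((x - y) / 2)| ≤ |x - y| / 2 :=
    Real.abs_sin_le_abs.trans_eq (by rw [abs_div, abs_two])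
  calc |Real.cos x - Real.cos y|
      = 2 * |Real.sin ((x + y) / 2)| * |Real.sin ((x - y) / 2)| := by
        rw [Real.cos_sub_cos, abs_mul, abs_mul, abs_neg, abs_two]
    _ ≤ 2 * (|y| + |x - y|) * (|x - y| / 2) := by gcongr
    _ = (|y| + |x - y|) * |x - y| := by ring

theorem abs_mul_sub_mul_le_of_abs_le_one {r η f g : ℝ} (hf : |f| ≤ 1) :
    |r * f - η * g| ≤ |r - η| + |η| * |f - g| :=
  calc |r * f - η * g| = |(r - η) * f + η * (f - g)| := by ring_nf
    _ ≤ |r - η| * |f| + |η| * |f - g| := by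
        rw [← abs_mul, ← abs_mul]; exact abs_add_le _ _
    _ ≤ |r - η| + |η| * |f - g| := by
        gcongr; exact mul_le_of_le_one_right (abs_nonneg _) hf

theorem ofReal_mul_exp_mem_rect {r η φ θ ε d M : ℝ} (hr : |r - η| ≤ ε) (hφ : |φ - θ| ≤ d)
    (hη : |η| ≤ M) :
    (r : ℂ) * exp (φ * I) ∈ rect (η * exp (θ * I)) (ε + M * ((|θ| + d) * d)) (ε + M * d) := by
  simp only [rect, re_ofReal_mul, im_ofReal_mul, exp_ofReal_mul_I_re, exp_ofReal_mul_I_im,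
    Set.mem_ofPred_eq]
  have hM : 0 ≤ M := (abs_nonneg η).trans hη
  have hd : 0 ≤ d := (abs_nonneg _).trans hφ
  constructor
  · calc _ ≤ |r - η| + |η| * |Real.cos φ - Real.cos θ| :=
          abs_mul_sub_mul_le_of_abs_le_one (Real.abs_cos_le_one φ)
      _ ≤ ε + M * ((|θ| + d) * d) := by
          gcongr
          exact (Real.abs_cos_sub_cos_le_mul φ θ).trans
            (mul_le_mul (by gcongr) hφ (abs_nonneg _) (by positivity))
  · calc _ ≤ |r - η| + |η| * |Real.sin φ - Real.sin θ| :=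
          abs_mul_sub_mul_le_of_abs_le_one (Real.abs_sin_le_one φ)
      _ ≤ ε + M * d := by
          gcongr
          exact (Real.abs_sin_sub_sin_le φ θ).trans hφ

theorem add_mem_rect {p q z w : ℂ} {a b c d : ℝ} (hz : z ∈ rect p a b) (hw : w ∈ rect q c d) :
    z + w ∈ rect (p + q) (a + c) (b + d) := by
  obtain ⟨hz₁, hz₂⟩ := hz
  obtain ⟨hw₁, hw₂⟩ := hw
  constructor
  · calc |(z + w).re - (p + q).re| = |(z.re - p.re) + (w.re - q.re)| := by
          rw [add_re, add_re]; ring_nf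
      _ ≤ a + c := (abs_add_le _ _).trans (add_le_add hz₁ hw₁)
  · calc |(z + w).im - (p + q).im| = |(z.im - p.im) + (w.im - q.im)| := by
          rw [add_im, add_im]; ring_nf
      _ ≤ b + d := (abs_add_le _ _).trans (add_le_add hz₂ hw₂)

theorem rect_mono {p : ℂ} {a a' b b' : ℝ} (ha : a ≤ a') (hb : b ≤ b') :
    rect p a b ⊆ rect p a' b' :=
  fun _ ⟨h₁, h₂⟩ => ⟨h₁.trans ha, h₂.trans hb⟩

theorem rot_add (σ : ℝ) (z w : ℂ) : rot σ (z + w) = rot σ z + rot σ w :=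
  mul_add _ _ _

theorem rot_eq_norm_mul_exp (σ : ℝ) (ξ : ℂ) :
    rot σ ξ = (‖ξ‖ : ℂ) * exp (↑(ξ.arg + σ) * I) := by
  rw [rot, ofReal_add, add_mul, exp_add]
  nth_rewrite 1 [← norm_mul_exp_arg_mul_I ξ]
  ring

theorem pPt_eq (δ ℓ η' η'' : ℝ) :
    pPt δ ℓ η' η'' =
      η' * exp (↑(ℓ * √δ) * I) + η'' * exp (↑(-(ℓ * √δ)) * I) := by
  apply Complex.ext <;>
    simp only [pPt, add_re, add_im, re_ofReal_mul, im_ofReal_mul, exp_ofReal_mul_I_re,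
      exp_ofReal_mul_I_im, Real.cos_neg, Real.sin_neg] <;> ring

theorem rot_mem_rect_of_mem_uSliceD {δ μ η M σ : ℝ} {J : Set ℝ} {ξ : ℂ} (hη : |η| ≤ M)
    (hξ : ξ ∈ uSliceD δ μ J η) :
    rot σ ξ ∈ rect (η * exp (↑(μ * √δ + σ) * I))
      (δ + M * ((|μ * √δ + σ| + √δ) * √δ)) (δ + M * √δ) := by
  obtain ⟨hnorm, ⟨-, harg₁, harg₂⟩, -⟩ := hξ
  rw [rot_eq_norm_mul_exp]
  refine ofReal_mul_exp_mem_rect ?_ ?_ hη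
  · rwa [abs_sub_comm]
  · rw [abs_le]; constructor <;> linarith

theorem statement10 :
    ∃ c₁ c₂ : ℝ, 0 < c₁ ∧ 0 < c₂ ∧
      ∀ δ : ℝ, 0 < δ → δ < 1 / 1000000 →
      ∀ α₁ β₁ α₂ β₂ : ℝ,
        1 ≤ α₁ → α₁ ≤ β₁ → β₁ ≤ 2 → β₁ - α₁ ≤ Real.sqrt δ →
        1 ≤ α₂ → α₂ ≤ β₂ → β₂ ≤ 2 → β₂ - α₂ ≤ Real.sqrt δ →
        ∀ a ∈ calID δ, ∀ k : ℕ, ∀ μ ν : ℤ,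
          (μ : ℝ) = a + (k : ℝ) / 2 → (ν : ℝ) = a - (k : ℝ) / 2 →
          μ ∈ calND δ → ν ∈ calND δ →
        ∀ η' ∈ Icc (α₁ - δ) (β₁ + δ),
        ∀ η'' ∈ Icc (α₂ - δ) (β₂ + δ),
          rot (-(a * Real.sqrt δ)) ''
              (uSliceD δ (μ : ℝ) (Icc α₁ β₁) η' + uSliceD δ (ν : ℝ) (Icc α₂ β₂) η'')
            ⊆ rect (pPt δ ((k : ℝ) / 2) η' η'')
                (c₁ * max ((k : ℝ) / 2) (1 / 2) * δ) (c₂ * Real.sqrt δ) := by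
  refine ⟨22, 8, by norm_num, by norm_num, ?_⟩
  intro δ hδ hδ_small α₁ β₁ α₂ β₂ hα₁ _ hβ₁ _ hα₂ _ hβ₂ _ a _ k μ ν hμ hν _ _
    η' hη' η'' hη''
  rintro _ ⟨_, ⟨x, hx, y, hy, rfl⟩, rfl⟩
  set ℓ : ℝ := (k : ℝ) / 2
  have hℓ : 0 ≤ ℓ * √δ := by positivity
  have hx' := rot_mem_rect_of_mem_uSliceD (σ := -(a * √δ))
    (abs_le.2 ⟨by linarith [hη'.1], by linarith [hη'.2]⟩ : |η'| ≤ 3) hx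
  have hy' := rot_mem_rect_of_mem_uSliceD (σ := -(a * √δ))
    (abs_le.2 ⟨by linarith [hη''.1], by linarith [hη''.2]⟩ : |η''| ≤ 3) hy
  rw [show (μ : ℝ) * √δ + -(a * √δ) = ℓ * √δ by rw [hμ]; ring, abs_of_nonneg hℓ] at hx'
  rw [show (ν : ℝ) * √δ + -(a * √δ) = -(ℓ * √δ) by rw [hν]; ring, abs_neg,
    abs_of_nonneg hℓ] at hy'
  rw [rot_add, pPt_eq]
  refine rect_mono ?_ ?_ (add_mem_rect hx' hy')
  · calc _ = (6 * ℓ + 8) * δ := by linear_combination (6 * ℓ + 6) * Real.mul_self_sqrt hδ.le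
      _ ≤ 22 * max ℓ (1 / 2) * δ := by
          gcongr; linarith [le_max_left ℓ (1 / 2), le_max_right ℓ (1 / 2)]
  · linarith [Real.le_sqrt_self_iff.2 (by linarith : δ ≤ 1)]
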